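/- There exist infinitely many finite groups G with inverse-closed identity-free generating sets S such that Cay(G,S) is 3-regular and admits an induced subgraph of maximum degree at most 1 on strictly more than half its vertices. -/

import Mathlib

/-- The Cayley graph of a group `G` with connection set `S`. -/
def cayley (G : Type*) [Group G] (S : Set G) : SimpleGraph G :=
  SimpleGraph.fromRel (fun g h => g⁻¹ * h ∈ S)

/-- `S` is an inverse-closed, identity-free generating set of `G` of size `d`, and the
Cayley graph `Cay(G, S)` admits an induced subgraph of maximum degree at most 1 on
strictly more than half of its vertices. -/
def GoodCayley (G : Type*) [Group G] (S : Set G) (d : ℕ) : Prop :=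
  (∀ s ∈ S, s⁻¹ ∈ S) ∧ (1 : G) ∉ S ∧ Subgroup.closure S = ⊤ ∧ S.ncard = d ∧
    ∃ U : Set G, 2 * U.ncard > Nat.card G ∧
      ∀ g ∈ U, ({h ∈ U | (cayley G S).Adj g h}).ncard ≤ 1

/-!
In `Cay(D_{2n}, sr '' C)` every edge joins a rotation `r i` to a reflection `sr j`, namely when
`i + j ∈ C`. Hence for `A ⊆ ZMod n` the vertex set `r '' A ∪ sr '' A` induces maximum degree at
most 1 as soon as every `a ∈ A` has at most one partner `b ∈ A` with `a + b ∈ C`. For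
`C = {0, 1, 3}` and `n = 9m` this holds for the `5m` residues congruent to `0, 2, 5, 6, 8`
modulo 9, a finite check in `ZMod 9`, giving `10m > 9m` vertices.
-/

open DihedralGroup

theorem Set.Subsingleton.ncard_le_one {α : Type*} {s : Set α} (hs : s.Subsingleton) :
    s.ncard ≤ 1 := by
  rcases hs.eq_empty_or_singleton with rfl | ⟨a, rfl⟩ <;> simp

theorem cayley_adj_iff {G : Type*} [Group G] {S : Set G} (hS : ∀ s ∈ S, s⁻¹ ∈ S)
    (h1 : (1 : G) ∉ S) {g h : G} : (cayley G S).Adj g h ↔ g⁻¹ * h ∈ S := by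
  refine ⟨fun hadj => ?_, fun hgh => ?_⟩
  · rcases ((SimpleGraph.fromRel_adj _ _ _).mp hadj).2 with h' | h'
    · exact h'
    · simpa using hS _ h'
  · refine (SimpleGraph.fromRel_adj _ _ _).mpr ⟨fun hgh' => ?_, Or.inl hgh⟩
    rw [hgh', inv_mul_cancel] at hgh
    exact h1 hgh

def AtMostOnePartner {M : Type*} [Add M] (C A : Set M) : Prop :=
  ∀ a ∈ A, {b ∈ A | a + b ∈ C}.Subsingleton

theorem AtMostOnePartner.preimage {M N F : Type*} [AddGroup M] [Add N] [FunLike F M N]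
    [AddHomClass F M N] {C' A' : Set N} (h : AtMostOnePartner C' A') (f : F) {C : Set M}
    (hC : Set.InjOn f C) (hCC' : Set.MapsTo f C C') : AtMostOnePartner C (f ⁻¹' A') := by
  rintro a ha b ⟨hb, hab⟩ b' ⟨hb', hab'⟩
  have hf : f b = f b' :=
    h (f a) ha ⟨hb, by simpa using hCC' hab⟩ ⟨hb', by simpa using hCC' hab'⟩
  exact add_left_cancel (hC hab hab' (by simp [hf]))

theorem AddMonoidHom.ncard_preimage_mul_card {G H : Type*} [AddGroup G] [Finite G] [AddGroup H]
    (f : G →+ H) (hf : Function.Surjective f) (T : Set H) :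
    (f ⁻¹' T).ncard * Nat.card H = T.ncard * Nat.card G := by
  classical
  have := Fintype.ofFinite G
  have := Finite.of_surjective f hf
  have := Fintype.ofFinite H
  have hsum (T : Finset H) :
      Finset.card {g | f g ∈ T} = T.card * Finset.card {g | f g = 0} := by
    rw [Finset.card_eq_sum_card_fiberwise (f := f) (t := T) (fun _ hg => by simpa using hg),
      Finset.sum_const_nat]
    intro t ht
    rw [← AddMonoidHom.card_fiber_eq_of_mem_range f (hf t) (hf 0)]
    congr 1
    ext g
    simp only [Finset.mem_filter, Finset.mem_univ, true_and, and_iff_right_iff_imp]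
    exact fun hg => hg ▸ ht
  have hG := hsum Finset.univ
  simp only [Finset.mem_univ, Finset.filter_true, Finset.card_univ] at hG
  have hT : f ⁻¹' T = ↑(Finset.univ.filter fun g => f g ∈ T.toFinset) := by ext; simp
  rw [hT, Set.ncard_coe_finset, hsum, Set.ncard_eq_toFinset_card', Nat.card_eq_fintype_card,
    Nat.card_eq_fintype_card, hG]
  ring

namespace DihedralGroup

variable {n : ℕ}

theorem closure_sr_zero_sr_one :
    Subgroup.closure {sr 0, sr 1} = (⊤ : Subgroup (DihedralGroup n)) := by
  set K := Subgroup.closure {(sr 0 : DihedralGroup n), sr 1}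
  have h0 : sr 0 ∈ K := Subgroup.subset_closure (by simp)
  have h1 : sr 1 ∈ K := Subgroup.subset_closure (by simp)
  have hr (i : ZMod n) : r i ∈ K := by
    have := zpow_mem (mul_mem h0 h1) i.cast
    rwa [sr_mul_sr, sub_zero, r_one_zpow, ZMod.intCast_zmod_cast] at this
  rw [Subgroup.eq_top_iff']
  rintro (i | i)
  · exact hr i
  · simpa using mul_mem h0 (hr i)

theorem sr_injective : Function.Injective (sr : ZMod n → DihedralGroup n) :=
  fun _ _ h => sr.inj h

theorem r_injective : Function.Injective (r : ZMod n → DihedralGroup n) :=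
  fun _ _ h => r.inj h

theorem ncard_r_image_union_sr_image [NeZero n] (A : Set (ZMod n)) :
    (r '' A ∪ sr '' A).ncard = 2 * A.ncard := by
  rw [Set.ncard_union_eq, Set.ncard_image_of_injective _ r_injective,
    Set.ncard_image_of_injective _ sr_injective, two_mul]
  rw [Set.disjoint_left]
  rintro _ ⟨i, -, rfl⟩ ⟨j, -, h⟩
  cases h

variable (C : Set (ZMod n))

theorem closure_sr_image_eq_top (h0 : 0 ∈ C) (h1 : 1 ∈ C) :
    Subgroup.closure (sr '' C) = ⊤ := by
  rw [eq_top_iff, ← closure_sr_zero_sr_one]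
  exact Subgroup.closure_mono <|
    Set.insert_subset_iff.mpr ⟨⟨0, h0, rfl⟩, Set.singleton_subset_iff.mpr ⟨1, h1, rfl⟩⟩

theorem sr_image_inv_mem : ∀ s ∈ sr '' C, s⁻¹ ∈ sr '' C := by
  rintro _ ⟨c, hc, rfl⟩
  exact ⟨c, hc, rfl⟩

theorem one_notMem_sr_image : (1 : DihedralGroup n) ∉ sr '' C := by
  rintro ⟨c, -, hc⟩
  cases hc

theorem cayley_sr_image_adj_iff {g h : DihedralGroup n} :
    (cayley _ (sr '' C)).Adj g h ↔ g⁻¹ * h ∈ sr '' C :=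
  cayley_adj_iff (sr_image_inv_mem C) (one_notMem_sr_image C)

@[simp] theorem not_cayley_sr_image_adj_r_r (i i' : ZMod n) :
    ¬ (cayley _ (sr '' C)).Adj (r i) (r i') := by
  simp [cayley_sr_image_adj_iff]

@[simp] theorem not_cayley_sr_image_adj_sr_sr (j j' : ZMod n) :
    ¬ (cayley _ (sr '' C)).Adj (sr j) (sr j') := by
  simp [cayley_sr_image_adj_iff]

@[simp] theorem cayley_sr_image_adj_r_sr (i j : ZMod n) :
    (cayley _ (sr '' C)).Adj (r i) (sr j) ↔ i + j ∈ C := by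
  simp [cayley_sr_image_adj_iff, add_comm]

@[simp] theorem cayley_sr_image_adj_sr_r (i j : ZMod n) :
    (cayley _ (sr '' C)).Adj (sr j) (r i) ↔ i + j ∈ C := by
  simp [cayley_sr_image_adj_iff, add_comm]

theorem ncard_adj_le_one_of_atMostOnePartner {A : Set (ZMod n)} (hA : AtMostOnePartner C A) :
    ∀ g ∈ r '' A ∪ sr '' A,
      {h ∈ r '' A ∪ sr '' A | (cayley _ (sr '' C)).Adj g h}.ncard ≤ 1 := by
  rintro _ (⟨a, ha, rfl⟩ | ⟨a, ha, rfl⟩) <;> apply Set.Subsingleton.ncard_le_one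
  · have : {h ∈ r '' A ∪ sr '' A | (cayley _ (sr '' C)).Adj (r a) h} =
        sr '' {b ∈ A | a + b ∈ C} := by
      ext (_ | _) <;> simp
    rw [this]
    exact (hA a ha).image _
  · have : {h ∈ r '' A ∪ sr '' A | (cayley _ (sr '' C)).Adj (sr a) h} =
        r '' {b ∈ A | a + b ∈ C} := by
      ext (_ | _) <;> simp [add_comm]
    rw [this]
    exact (hA a ha).image _

end DihedralGroup

section NineResidues

/-- The partners are `0 ↔ 0`, `2 ↔ 8`, `5 ↔ 5` and `6 ↔ 6`. -/
theorem atMostOnePartner_zmod_nine :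
    AtMostOnePartner ({0, 1, 3} : Set (ZMod 9)) {0, 2, 5, 6, 8} := by
  unfold AtMostOnePartner Set.Subsingleton
  decide

variable (m : ℕ)

abbrev reduceMod9 : ZMod (9 * m) →+* ZMod 9 := ZMod.castHom (dvd_mul_right 9 m) (ZMod 9)

theorem reduceMod9_injOn : Set.InjOn (reduceMod9 m) {0, 1, 3} := by
  rintro _ (rfl | rfl | rfl) _ (rfl | rfl | rfl) h <;>
    first
    | rfl
    | simp only [map_zero, map_one, map_ofNat] at h
      exact absurd h (by decide)

theorem ncard_zero_one_three : ({0, 1, 3} : Set (ZMod (9 * m))).ncard = 3 := by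
  rw [← (reduceMod9_injOn m).ncard_image]
  simp only [Set.image_insert_eq, Set.image_singleton, map_zero, map_one, map_ofNat]
  rw [Set.ncard_eq_toFinset_card']
  decide

theorem atMostOnePartner_preimage_reduceMod9 :
    AtMostOnePartner ({0, 1, 3} : Set (ZMod (9 * m))) (reduceMod9 m ⁻¹' {0, 2, 5, 6, 8}) :=
  atMostOnePartner_zmod_nine.preimage (reduceMod9 m) (reduceMod9_injOn m) <| by
    rintro _ (rfl | rfl | rfl) <;> simp only [map_zero, map_one, map_ofNat] <;> simp

theorem ncard_preimage_reduceMod9 [NeZero m] :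
    (reduceMod9 m ⁻¹' {0, 2, 5, 6, 8}).ncard = 5 * m := by
  have h := (reduceMod9 m).toAddMonoidHom.ncard_preimage_mul_card
    (ZMod.ringHom_surjective (reduceMod9 m)) {0, 2, 5, 6, 8}
  have h5 : ({0, 2, 5, 6, 8} : Set (ZMod 9)).ncard = 5 := by
    rw [Set.ncard_eq_toFinset_card']
    decide
  rw [h5, Nat.card_zmod, Nat.card_zmod] at h
  simp only [RingHom.toAddMonoidHom_eq_coe, AddMonoidHom.coe_coe] at h
  omega

end NineResidues

theorem goodCayley_dihedralGroup (m : ℕ) [NeZero m] :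
    GoodCayley (DihedralGroup (9 * m)) (sr '' {0, 1, 3}) 3 := by
  refine ⟨sr_image_inv_mem _, one_notMem_sr_image _, closure_sr_image_eq_top _ (by simp) (by simp),
    by rw [Set.ncard_image_of_injective _ sr_injective, ncard_zero_one_three], ?_⟩
  refine ⟨_, ?_, ncard_adj_le_one_of_atMostOnePartner _ (atMostOnePartner_preimage_reduceMod9 m)⟩
  rw [ncard_r_image_union_sr_image, ncard_preimage_reduceMod9, nat_card]
  have := NeZero.ne m
  omega

/-- There exist infinitely many finite groups `G` with inverse-closed identity-free
generating sets `S` such that `Cay(G, S)` is 3-regular (i.e. `|S| = 3` with all the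
above conditions) and admits an induced subgraph of maximum degree at most 1 on
strictly more than half its vertices. -/
theorem infinitely_many_cubic_cayley_counterexamples :
    ∀ N : ℕ, ∃ (G : Type) (instG : Group G) (_ : Finite G) (S : Set G),
      Nat.card G > N ∧ @GoodCayley G instG S 3 := by
  intro N
  refine ⟨DihedralGroup (9 * (N + 1)), inferInstance, inferInstance, _, ?_,
    goodCayley_dihedralGroup (N + 1)⟩
  rw [nat_card]
  omega
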